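/- arXiv:1108.0132 — 10 statements merged into one kernel-verified Lean document; each statement's English description precedes it below -/
import Mathlib

section
/- Let N be an even positive integer, let 0 ≤ n ≤ N be an integer, and let α, β be real parameters. For ε ≠ 0 set q = −e^ε, a = e^{−αε}, b = e^{−βε}, and define the dual q-Hahn recurrence coefficients A_n = (1 − q^{n−N})(1 − a q^{n+1}) and C_n = a q (1 − q^n)(b − q^{n−N−1}). Then, as ε → 0 (ε ≠ 0), A_n/(1+q) converges to 2(n−N) if n is even and to 2(n+1−α) if n is odd, while C_n/(1+q) converges to −2n if n is even and to 2(N+1−β−n) if n is odd. -/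
open Filter Topology

lemma exp_zpow' (ε : ℝ) (k : ℤ) : (Real.exp ε) ^ k = Real.exp (k * ε) := by
  induction k using Int.rec with
  | ofNat m => rw [Int.ofNat_eq_coe, zpow_natCast, ← Real.exp_nat_mul]; push_cast; ring_nf
  | negSucc m =>
      rw [zpow_negSucc, ← Real.exp_nat_mul, ← Real.exp_neg]
      push_cast; ring_nf

lemma negexp_zpow (ε : ℝ) (k : ℤ) :
    (-Real.exp ε) ^ k = (-1 : ℝ) ^ k * Real.exp (k * ε) := by
  rw [show (-Real.exp ε) = (-1) * Real.exp ε by ring, mul_zpow, exp_zpow']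

lemma slope_exp (c : ℝ) :
    Tendsto (fun ε : ℝ => (Real.exp (c * ε) - 1) / ε) (𝓝[≠] 0) (𝓝 c) := by
  have h : HasDerivAt (fun ε : ℝ => Real.exp (c * ε)) c 0 := by
    have := ((hasDerivAt_id (0:ℝ)).const_mul c).exp
    simpa using this
  refine (hasDerivAt_iff_tendsto_slope.mp h).congr fun y => ?_
  simp [slope_def_field]

lemma key (c₁ c₂ : ℝ) :
    Tendsto (fun ε : ℝ => (Real.exp (c₁ * ε) - Real.exp (c₂ * ε)) / (1 - Real.exp ε))
      (𝓝[≠] 0) (𝓝 (c₂ - c₁)) := by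
  have h1 := slope_exp c₁
  have h2 := slope_exp c₂
  have h3 : Tendsto (fun ε : ℝ => -((Real.exp (1 * ε) - 1) / ε)) (𝓝[≠] 0) (𝓝 (-1)) :=
    (slope_exp 1).neg
  have h := (h1.sub h2).div h3 (by norm_num)
  have heq : ∀ᶠ ε in 𝓝[≠] (0:ℝ),
      ((Real.exp (c₁ * ε) - 1) / ε - (Real.exp (c₂ * ε) - 1) / ε) /
        (-((Real.exp (1 * ε) - 1) / ε)) =
      (Real.exp (c₁ * ε) - Real.exp (c₂ * ε)) / (1 - Real.exp ε) := by
    filter_upwards [self_mem_nhdsWithin] with ε hε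
    have hε' : ε ≠ 0 := hε
    rw [one_mul]
    rw [div_sub_div_same, show -((Real.exp ε - 1)/ε) = (1 - Real.exp ε)/ε by ring]
    rcases eq_or_ne (1 - Real.exp ε) 0 with h0 | h0
    · simp [h0]
    · field_simp; ring
  have : (c₂ - c₁ : ℝ) = (c₁ - c₂) / (-1) := by ring
  rw [this]
  exact h.congr' heq

lemma const_part (c₁ c₂ : ℝ) (s : ℝ) :
    Tendsto (fun ε : ℝ => Real.exp (c₁ * ε) + s * Real.exp (c₂ * ε)) (𝓝[≠] 0)
      (𝓝 (1 + s)) := by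
  have h : Tendsto (fun ε : ℝ => Real.exp (c₁ * ε) + s * Real.exp (c₂ * ε)) (𝓝 0)
      (𝓝 (Real.exp (c₁ * 0) + s * Real.exp (c₂ * 0))) :=
    (Continuous.tendsto (by fun_prop) 0)
  simpa using h.mono_left nhdsWithin_le_nhds

/-- $q \to -1$ limit (even $N$) of the dual $q$-Hahn recurrence
coefficients $A_n = (1-q^{n-N})(1-aq^{n+1})$ and $C_n = aq(1-q^n)(b-q^{n-N-1})$
with $q = -e^{\varepsilon}$, $a = e^{-\alpha\varepsilon}$, $b = e^{-\beta\varepsilon}$. -/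
theorem dual_qHahn_coeff_limit_even
    (N : ℕ) (hN : 0 < N) (hNeven : Even N)
    (n : ℕ) (hn : n ≤ N) (α β : ℝ) :
    Tendsto (fun ε : ℝ =>
        ((1 - (-Real.exp ε) ^ ((n : ℤ) - (N : ℤ))) *
          (1 - Real.exp (-α * ε) * (-Real.exp ε) ^ ((n : ℤ) + 1))) /
        (1 + (-Real.exp ε)))
      (𝓝[≠] (0 : ℝ))
      (𝓝 (if Even n then 2 * ((n : ℝ) - (N : ℝ)) else 2 * ((n : ℝ) + 1 - α)))
    ∧
    Tendsto (fun ε : ℝ =>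
        (Real.exp (-α * ε) * (-Real.exp ε) * (1 - (-Real.exp ε) ^ (n : ℤ)) *
          (Real.exp (-β * ε) - (-Real.exp ε) ^ ((n : ℤ) - (N : ℤ) - 1))) /
        (1 + (-Real.exp ε)))
      (𝓝[≠] (0 : ℝ))
      (𝓝 (if Even n then -2 * (n : ℝ) else 2 * ((N : ℝ) + 1 - β - (n : ℝ)))) := by
  have hNe : Even ((N : ℤ)) := (Int.even_coe_nat N).mpr hNeven
  by_cases hne : Even n
  · -- n even
    have hnez : Even ((n : ℤ)) := (Int.even_coe_nat n).mpr hne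
    have s1 : (-1 : ℝ) ^ ((n : ℤ) - N) = 1 := (hnez.sub hNe).neg_one_zpow
    have s2 : (-1 : ℝ) ^ ((n : ℤ) + 1) = -1 := by
      have : Odd ((n : ℤ) + 1) := hnez.add_one
      exact this.neg_one_zpow
    have s3 : (-1 : ℝ) ^ ((n : ℤ)) = 1 := hnez.neg_one_zpow
    have s4 : (-1 : ℝ) ^ ((n : ℤ) - N - 1) = -1 := by
      have : Odd ((n : ℤ) - N - 1) := by
        rcases hnez.sub hNe with ⟨k, hk⟩
        exact ⟨k - 1, by omega⟩
      exact this.neg_one_zpow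
    simp only [if_pos hne]
    constructor
    · have hA := (key 0 ((n : ℝ) - N)).mul (const_part (((n:ℝ) + 1 - α)) 0 1)
      have : (2 : ℝ) * ((n : ℝ) - N) = (((n:ℝ) - N) - 0) * (1 + 1) := by ring
      rw [this]
      refine hA.congr (fun ε => ?_)
      rw [negexp_zpow, negexp_zpow, s1, s2]
      push_cast
      rw [show ((0:ℝ) * ε) = 0 by ring, Real.exp_zero,
        show Real.exp (((n:ℝ) + 1 - α) * ε)
            = Real.exp (-α * ε) * Real.exp (((n:ℝ) + 1) * ε) by
          rw [← Real.exp_add]; ring_nf]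
      ring
    · have hC := ((const_part (1 - α) 0 0).neg.mul (key 0 (n : ℝ))).mul
        (const_part (-β) ((n:ℝ) - N - 1) 1)
      have : (-2 : ℝ) * (n : ℝ) = (-(1 + 0) * ((n : ℝ) - 0)) * (1 + 1) := by ring
      rw [this]
      refine hC.congr (fun ε => ?_)
      rw [negexp_zpow, negexp_zpow, s3, s4]
      push_cast
      rw [show ((0:ℝ) * ε) = 0 by ring, Real.exp_zero,
        show Real.exp ((1 - α) * ε) = Real.exp (-α * ε) * Real.exp ε by
          rw [← Real.exp_add]; ring_nf]
      ring
  · -- n odd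
    have hno : Odd n := Nat.odd_iff.mpr (Nat.not_even_iff.mp hne)
    have hnoz : Odd ((n : ℤ)) := (Int.odd_coe_nat n).mpr hno
    have s1 : (-1 : ℝ) ^ ((n : ℤ) - N) = -1 := (hnoz.sub_even hNe).neg_one_zpow
    have s2 : (-1 : ℝ) ^ ((n : ℤ) + 1) = 1 := (hnoz.add_one).neg_one_zpow
    have s3 : (-1 : ℝ) ^ ((n : ℤ)) = -1 := hnoz.neg_one_zpow
    have s4 : (-1 : ℝ) ^ ((n : ℤ) - N - 1) = 1 := by
      have : Even ((n : ℤ) - N - 1) := by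
        rcases hnoz.sub_even hNe with ⟨k, hk⟩
        exact ⟨k, by omega⟩
      exact this.neg_one_zpow
    simp only [if_neg hne]
    constructor
    · have hA := (const_part ((n:ℝ) - N) 0 1).mul (key 0 ((n:ℝ) + 1 - α))
      have : (2 : ℝ) * ((n : ℝ) + 1 - α) = (1 + 1) * (((n:ℝ) + 1 - α) - 0) := by ring
      rw [this]
      refine hA.congr (fun ε => ?_)
      rw [negexp_zpow, negexp_zpow, s1, s2]
      push_cast
      rw [show ((0:ℝ) * ε) = 0 by ring, Real.exp_zero,
        show Real.exp (((n:ℝ) + 1 - α) * ε)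
            = Real.exp (-α * ε) * Real.exp (((n:ℝ) + 1) * ε) by
          rw [← Real.exp_add]; ring_nf]
      ring
    · have hC := ((const_part (1 - α) 0 0).neg.mul (const_part (n:ℝ) 0 1)).mul
        (key (-β) ((n:ℝ) - N - 1))
      have : (2 : ℝ) * ((N : ℝ) + 1 - β - n) =
          (-(1 + 0) * (1 + 1)) * (((n:ℝ) - N - 1) - (-β)) := by ring
      rw [this]
      refine hC.congr (fun ε => ?_)
      rw [negexp_zpow, negexp_zpow, s3, s4]
      push_cast
      rw [show ((0:ℝ) * ε) = 0 by ring, Real.exp_zero,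
        show Real.exp ((1 - α) * ε) = Real.exp (-α * ε) * Real.exp ε by
          rw [← Real.exp_add]; ring_nf]
      ring
end

section
/- Let s be a nonnegative integer and α, β real parameters. For ε ≠ 0 set q = −e^ε, a = e^{−αε}, b = e^{−βε}, and let x_s = q^{−s} + a b q^{s+1} be the dual q-Hahn grid. Then, as ε → 0 (ε ≠ 0), x_s/(1+q) converges to y_s = (−1)^s (1 − α − β + 2s); that is, to −α−β+2s+1 if s is even and to α+β−2s−1 if s is odd. -/
open Filter Topology

/-- $q \to -1$ limit (even-$N$ parametrization) of the dual $q$-Hahn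
grid $x_s = q^{-s} + abq^{s+1}$ with $q = -e^{\varepsilon}$, $a = e^{-\alpha\varepsilon}$,
$b = e^{-\beta\varepsilon}$: $x_s/(1+q) \to y_s = (-1)^s(1-\alpha-\beta+2s)$. -/
theorem dual_qHahn_grid_limit_even
    (s : ℕ) (α β : ℝ) :
    Tendsto (fun ε : ℝ =>
        ((-Real.exp ε) ^ (-(s : ℤ)) +
          Real.exp (-α * ε) * Real.exp (-β * ε) * (-Real.exp ε) ^ ((s : ℤ) + 1)) /
        (1 + (-Real.exp ε)))
      (𝓝[≠] (0 : ℝ))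
      (𝓝 ((-1 : ℝ) ^ s * (1 - α - β + 2 * (s : ℝ)))) ∧
    (-1 : ℝ) ^ s * (1 - α - β + 2 * (s : ℝ)) =
      (if Even s then -α - β + 2 * (s : ℝ) + 1 else α + β - 2 * (s : ℝ) - 1) := by
  constructor
  · set a : ℝ := -(s : ℝ) with ha
    set b : ℝ := (s : ℝ) + 1 - α - β with hb
    -- h ε = exp (a ε) - exp (b ε), derivative a - b at 0
    have hh : HasDerivAt (fun ε : ℝ => Real.exp (a * ε) - Real.exp (b * ε)) (a - b) 0 := by
      have h1 : HasDerivAt (fun ε : ℝ => Real.exp (a * ε)) a 0 := by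
        simpa using (((hasDerivAt_id (0:ℝ)).const_mul a).exp)
      have h2 : HasDerivAt (fun ε : ℝ => Real.exp (b * ε)) b 0 := by
        simpa using (((hasDerivAt_id (0:ℝ)).const_mul b).exp)
      exact h1.sub h2
    have hk : HasDerivAt (fun ε : ℝ => 1 - Real.exp ε) (-1) 0 := by
      exact ((hasDerivAt_const (0:ℝ) (1:ℝ)).sub (Real.hasDerivAt_exp 0)).congr_deriv (by simp)
    have th : Tendsto (slope (fun ε : ℝ => Real.exp (a * ε) - Real.exp (b * ε)) 0)
        (𝓝[≠] 0) (𝓝 (a - b)) := hasDerivAt_iff_tendsto_slope.mp hh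
    have tk : Tendsto (slope (fun ε : ℝ => 1 - Real.exp ε) 0) (𝓝[≠] 0) (𝓝 (-1)) :=
      hasDerivAt_iff_tendsto_slope.mp hk
    have tki : Tendsto (fun ε => (slope (fun ε : ℝ => 1 - Real.exp ε) 0 ε)⁻¹)
        (𝓝[≠] 0) (𝓝 ((-1 : ℝ)⁻¹)) := tk.inv₀ (by norm_num)
    have tmain : Tendsto (fun ε : ℝ => (-1 : ℝ) ^ s *
        slope (fun ε : ℝ => Real.exp (a * ε) - Real.exp (b * ε)) 0 ε *
        (slope (fun ε : ℝ => 1 - Real.exp ε) 0 ε)⁻¹)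
        (𝓝[≠] 0) (𝓝 ((-1 : ℝ) ^ s * (a - b) * (-1 : ℝ)⁻¹)) :=
      ((th.const_mul _).mul tki)
    have hlim : (-1 : ℝ) ^ s * (a - b) * (-1 : ℝ)⁻¹
        = (-1 : ℝ) ^ s * (1 - α - β + 2 * (s : ℝ)) := by
      rw [ha, hb]; ring
    rw [hlim] at tmain
    refine tmain.congr' ?_
    filter_upwards [self_mem_nhdsWithin] with ε (hε : ε ≠ 0)
    have hE : Real.exp ε ≠ 0 := Real.exp_ne_zero ε
    have hE1 : (1 : ℝ) - Real.exp ε ≠ 0 := by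
      intro h
      apply hε
      have : Real.exp ε = Real.exp 0 := by rw [Real.exp_zero]; linarith
      exact Real.exp_injective this
    have e1 : Real.exp (a * ε) = (Real.exp ε ^ s)⁻¹ := by
      rw [ha, ← Real.exp_nat_mul, ← Real.exp_neg]; ring_nf
    have e2 : Real.exp (b * ε) =
        Real.exp (-α * ε) * Real.exp (-β * ε) * (Real.exp ε ^ s * Real.exp ε) := by
      rw [hb, ← Real.exp_nat_mul, ← Real.exp_add, ← Real.exp_add, ← Real.exp_add]
      ring_nf
    have z1 : (-Real.exp ε) ^ (-(s : ℤ)) = (-1 : ℝ) ^ s * (Real.exp ε ^ s)⁻¹ := by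
      rw [zpow_neg, zpow_natCast, neg_pow, mul_inv, ← inv_pow]
      norm_num
    have z2 : (-Real.exp ε) ^ ((s : ℤ) + 1)
        = -((-1 : ℝ) ^ s * (Real.exp ε ^ s * Real.exp ε)) := by
      rw [zpow_add₀ (by simp [hE] : (-Real.exp ε) ≠ 0), zpow_natCast, zpow_one, neg_pow]
      ring
    have hE1' : (1 : ℝ) + -Real.exp ε ≠ 0 := by
      intro h; exact hE1 (by linarith)
    have hEs : Real.exp ε ^ s ≠ 0 := pow_ne_zero _ hE
    simp only [slope_def_field, e1, e2, z1, z2, sub_zero, mul_zero, Real.exp_zero]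
    rw [inv_div]
    simp only [sub_self, sub_zero]
    field_simp
    ring
  · rcases Nat.even_or_odd s with h | h
    · rw [if_pos h, h.neg_one_pow]; ring
    · rw [if_neg (Nat.not_even_iff_odd.mpr h), h.neg_one_pow]; ring
end

section
/- Let s be a nonnegative integer and α, β real parameters. For ε ≠ 0 set q = −e^ε, a = −e^{αε}, b = −e^{βε}, and let x_s = q^{−s} + a b q^{s+1} be the dual q-Hahn grid. Then, as ε → 0 (ε ≠ 0), x_s/(1+q) converges to y_s = (−1)^s (α + β + 2s + 1); that is, to α+β+2s+1 if s is even and to −α−β−2s−1 if s is odd. -/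
open Filter Topology

/-- $q \to -1$ limit (odd-$N$ parametrization) of the dual $q$-Hahn
grid $x_s = q^{-s} + abq^{s+1}$ with $q = -e^{\varepsilon}$, $a = -e^{\alpha\varepsilon}$,
$b = -e^{\beta\varepsilon}$: $x_s/(1+q) \to y_s = (-1)^s(\alpha+\beta+2s+1)$. -/
theorem dual_qHahn_grid_limit_odd
    (s : ℕ) (α β : ℝ) :
    Tendsto (fun ε : ℝ =>
        ((-Real.exp ε) ^ (-(s : ℤ)) +
          (-Real.exp (α * ε)) * (-Real.exp (β * ε)) * (-Real.exp ε) ^ ((s : ℤ) + 1)) /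
        (1 + (-Real.exp ε)))
      (𝓝[≠] (0 : ℝ))
      (𝓝 ((-1 : ℝ) ^ s * (α + β + 2 * (s : ℝ) + 1))) ∧
    (-1 : ℝ) ^ s * (α + β + 2 * (s : ℝ) + 1) =
      (if Even s then α + β + 2 * (s : ℝ) + 1 else -α - β - 2 * (s : ℝ) - 1) := by
  constructor
  · set c : ℝ := α + β + (s : ℝ) + 1 with hc
    set f : ℝ → ℝ := fun ε => Real.exp (-(s : ℝ) * ε) - Real.exp (c * ε) with hfdef
    set g : ℝ → ℝ := fun ε => 1 - Real.exp ε with hgdef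
    -- derivative facts
    have hf' : HasDerivAt f (-(s : ℝ) - c) 0 := by
      have h1 : HasDerivAt (fun ε : ℝ => Real.exp (-(s : ℝ) * ε))
          (-(s : ℝ)) 0 := by
        simpa using ((hasDerivAt_id (0:ℝ)).const_mul (-(s : ℝ))).exp
      have h2 : HasDerivAt (fun ε : ℝ => Real.exp (c * ε)) c 0 := by
        simpa using ((hasDerivAt_id (0:ℝ)).const_mul c).exp
      simpa [hfdef, Pi.sub_def] using h1.sub h2
    have hg' : HasDerivAt g (-1 : ℝ) 0 := by
      have := (hasDerivAt_const (0:ℝ) (1:ℝ)).sub (Real.hasDerivAt_exp 0)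
      simpa [hgdef, Pi.sub_def] using this
    have hdiv : Tendsto (fun ε => slope f 0 ε / slope g 0 ε) (𝓝[≠] (0:ℝ))
        (𝓝 ((-(s : ℝ) - c) / (-1 : ℝ))) :=
      (hasDerivAt_iff_tendsto_slope.mp hf').div
        (hasDerivAt_iff_tendsto_slope.mp hg') (by norm_num)
    have hmul : Tendsto (fun ε => ((-1 : ℝ) ^ s) * (slope f 0 ε / slope g 0 ε)) (𝓝[≠] (0:ℝ))
        (𝓝 (((-1 : ℝ) ^ s) * ((-(s : ℝ) - c) / (-1 : ℝ)))) := hdiv.const_mul _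
    have hval : ((-1 : ℝ) ^ s) * ((-(s : ℝ) - c) / (-1 : ℝ))
        = (-1 : ℝ) ^ s * (α + β + 2 * (s : ℝ) + 1) := by
      rw [hc]; ring
    rw [← hval]
    refine Tendsto.congr' ?_ hmul
    filter_upwards [self_mem_nhdsWithin] with ε hε
    have hε0 : (ε : ℝ) ≠ 0 := hε
    have hslopef : slope f 0 ε = f ε / ε := by
      simp [slope_fun_def, hfdef, div_eq_inv_mul]
    have hslopeg : slope g 0 ε = g ε / ε := by
      simp [hgdef, slope_fun_def, div_eq_inv_mul]
    have hratio : (f ε / ε) / (g ε / ε) = f ε / g ε := by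
      rw [div_div_div_eq, mul_comm ε (g ε), mul_div_mul_right _ _ hε0]
    rw [hslopef, hslopeg, hratio]
    have h1 : (-Real.exp ε) ^ (-(s : ℤ)) = (-1 : ℝ) ^ s * Real.exp (-(s : ℝ) * ε) := by
      rw [zpow_neg, zpow_natCast, neg_pow, ← Real.exp_nat_mul, mul_inv,
        ← Real.exp_neg, ← inv_pow, inv_neg, inv_one, neg_mul]
    have h2 : (-Real.exp (α * ε)) * (-Real.exp (β * ε)) * (-Real.exp ε) ^ ((s : ℤ) + 1)
        = -((-1 : ℝ) ^ s * Real.exp (c * ε)) := by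
      have hp : ((-Real.exp ε) ^ ((s : ℤ) + 1))
          = (-1 : ℝ) ^ (s + 1) * Real.exp (((s : ℝ) + 1) * ε) := by
        have hcast : ((s : ℤ) + 1) = ((s + 1 : ℕ) : ℤ) := by push_cast; ring
        rw [hcast, zpow_natCast, neg_pow, ← Real.exp_nat_mul]
        push_cast
        ring_nf
      have he : Real.exp (α * ε) * Real.exp (β * ε) * Real.exp (((s : ℝ) + 1) * ε)
          = Real.exp (c * ε) := by
        rw [← Real.exp_add, ← Real.exp_add, hc]
        ring_nf
      calc (-Real.exp (α * ε)) * (-Real.exp (β * ε)) * (-Real.exp ε) ^ ((s : ℤ) + 1)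
          = (-1 : ℝ) ^ (s + 1) *
            (Real.exp (α * ε) * Real.exp (β * ε) * Real.exp (((s : ℝ) + 1) * ε)) := by
            rw [hp]; ring
        _ = -((-1 : ℝ) ^ s * Real.exp (c * ε)) := by rw [he, pow_succ]; ring
    rw [h1, h2, hfdef, hgdef]
    simp only
    have hd : (1 : ℝ) + -Real.exp ε = 1 - Real.exp ε := by ring
    rw [hd, ← mul_div_assoc]
    congr 1
    ring
  · rcases Nat.even_or_odd s with h | h
    · simp [h, h.neg_one_pow]
    · rw [if_neg (Nat.not_even_iff_odd.mpr h), h.neg_one_pow]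
      ring
end

section
/- Let N be an even positive integer and α, β real, and let u_n = 4n(α−n) for n even and u_n = 4(N−n+1)(n+β−N−1) for n odd. Then u_n > 0 for all integers n with 1 ≤ n ≤ N if and only if α > N and β > N. -/
/-- for even positive $N$, positivity of the recurrence
coefficients $u_n$ of the dual $-1$ Hahn polynomials for $1 \le n \le N$ is
equivalent to $\alpha > N$ and $\beta > N$. -/
theorem dualMinusOneHahn_positivity_even
    (N : ℕ) (hN : 0 < N) (hNeven : Even N) (α β : ℝ)
    (u : ℕ → ℝ)
    (hu : ∀ n : ℕ, u n =
      if Even n then 4 * (n : ℝ) * (α - (n : ℝ))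
      else 4 * ((N : ℝ) - (n : ℝ) + 1) * ((n : ℝ) + β - (N : ℝ) - 1)) :
    (∀ n : ℕ, 1 ≤ n → n ≤ N → 0 < u n) ↔ ((N : ℝ) < α ∧ (N : ℝ) < β) := by
  have hN0 : (0 : ℝ) < (N : ℝ) := by exact_mod_cast hN
  constructor
  · intro h
    constructor
    · have hP := h N hN le_rfl
      rw [hu N, if_pos hNeven] at hP
      nlinarith
    · have h1 : ¬ Even 1 := by decide
      have hP := h 1 le_rfl hN
      rw [hu 1, if_neg h1] at hP
      push_cast at hP
      nlinarith
  · rintro ⟨hα, hβ⟩ n hn1 hnN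
    have hn1' : (1 : ℝ) ≤ (n : ℝ) := by exact_mod_cast hn1
    have hnN' : (n : ℝ) ≤ (N : ℝ) := by exact_mod_cast hnN
    rw [hu n]
    by_cases he : Even n
    · rw [if_pos he]
      nlinarith
    · rw [if_neg he]
      nlinarith
end

section
/- Let N be an odd positive integer and α, β real, and let u_n = 4n(N+1−n) for n even and u_n = 4(α+n)(β+N+1−n) for n odd. Then u_n > 0 for all integers n with 1 ≤ n ≤ N if and only if either (α > −1 and β > −1) or (α < −N and β < −N). -/
/-- for odd positive $N$, positivity of the recurrence
coefficients $u_n$ of the dual $-1$ Hahn polynomials for $1 \le n \le N$ is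
equivalent to ($\alpha > -1$ and $\beta > -1$) or ($\alpha < -N$ and $\beta < -N$). -/
theorem dualMinusOneHahn_positivity_odd
    (N : ℕ) (hN : 0 < N) (hNodd : Odd N) (α β : ℝ)
    (u : ℕ → ℝ)
    (hu : ∀ n : ℕ, u n =
      if Even n then 4 * (n : ℝ) * ((N : ℝ) + 1 - (n : ℝ))
      else 4 * (α + (n : ℝ)) * (β + (N : ℝ) + 1 - (n : ℝ))) :
    (∀ n : ℕ, 1 ≤ n → n ≤ N → 0 < u n) ↔
      ((-1 < α ∧ -1 < β) ∨ (α < -(N : ℝ) ∧ β < -(N : ℝ))) := by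
  have hN1 : (1:ℝ) ≤ (N:ℝ) := by exact_mod_cast hN
  constructor
  · intro h
    have h1 := h 1 le_rfl hN
    have hNN := h N hN le_rfl
    rw [hu] at h1 hNN
    rw [if_neg (by simp)] at h1
    rw [if_neg (Nat.not_even_iff_odd.mpr hNodd)] at hNN
    push_cast at h1 hNN
    -- h1 : 0 < 4 * (α + 1) * (β + N + 1 - 1)
    -- hNN : 0 < 4 * (α + N) * (β + N + 1 - N)
    by_cases hα : -1 < α
    · left
      refine ⟨hα, ?_⟩
      have hαN : 0 < α + (N:ℝ) := by linarith
      nlinarith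
    · right
      push_neg at hα
      have hα' : α < -1 := by
        rcases lt_or_eq_of_le hα with h' | h'
        · exact h'
        · exfalso; rw [h'] at h1; nlinarith
      have hβ : β + (N:ℝ) < 0 := by nlinarith
      have hβ1 : β + 1 < 0 := by linarith
      constructor
      · nlinarith
      · linarith
  · intro h n h1n hnN
    rw [hu n]
    have hn1 : (1:ℝ) ≤ (n:ℝ) := by exact_mod_cast h1n
    have hnN' : (n:ℝ) ≤ (N:ℝ) := by exact_mod_cast hnN
    rcases h with ⟨ha, hb⟩ | ⟨ha, hb⟩ <;> split_ifs with he
    · nlinarith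
    · nlinarith
    · nlinarith
    · have hA : α + (n:ℝ) < 0 := by linarith
      have hB : β + (N:ℝ) + 1 - (n:ℝ) < 0 := by linarith
      nlinarith [mul_pos (neg_pos.2 hA) (neg_pos.2 hB)]
end

section
/- Let N be an even positive integer and α = N + ε₁, β = N + ε₂ with ε₁ > 0, ε₂ > 0. Define the weights w_{2s} = (−1)^s ((−N/2)_s / s!) · (1−α/2)_s (1−α/2−β/2)_s / ((1−β/2)_s (N/2+1−α/2−β/2)_s) for 0 ≤ s ≤ N/2, and w_{2s+1} = (−1)^s ((−N/2)_{s+1} / s!) · (1−α/2)_s (1−α/2−β/2)_s / ((1−β/2)_s (N/2+1−α/2−β/2)_{s+1}) for 0 ≤ s ≤ N/2 − 1. Then w_s > 0 for all s = 0, 1, …, N. -/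
/-- The Pochhammer symbol $(a)_k = a(a+1)\cdots(a+k-1)$, $(a)_0 = 1$. -/
noncomputable def poch (a : ℝ) (k : ℕ) : ℝ := (ascPochhammer ℝ k).eval a

lemma poch_sign (a : ℝ) : ∀ k : ℕ, (∀ j : ℕ, j < k → a + j < 0) →
    0 < (-1 : ℝ) ^ k * poch a k := by
  intro k
  induction k with
  | zero => intro _; simp [poch]
  | succ n ih =>
    intro h
    have h1 := ih (fun j hj => h j (hj.trans (Nat.lt_succ_self n)))
    have h2 : a + n < 0 := h n (Nat.lt_succ_self n)
    have hrw : poch a (n + 1) = poch a n * (a + n) := by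
      simp [poch, ascPochhammer_succ_eval]
    rw [hrw, pow_succ]
    nlinarith [mul_pos h1 (neg_pos.mpr h2)]

/-- positivity of the orthogonality weights of the dual $-1$
Hahn polynomials for even $N$, with $\alpha = N+\varepsilon_1$,
$\beta = N+\varepsilon_2$, $\varepsilon_1,\varepsilon_2 > 0$. -/
theorem dualMinusOneHahn_weights_pos_even
    (N : ℕ) (hN : 0 < N) (hNeven : Even N)
    (ε₁ ε₂ α β : ℝ) (hε₁ : 0 < ε₁) (hε₂ : 0 < ε₂)
    (hα : α = (N : ℝ) + ε₁) (hβ : β = (N : ℝ) + ε₂)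
    (w : ℕ → ℝ)
    (hwEven : ∀ s : ℕ, 2 * s ≤ N →
      w (2 * s) = (-1 : ℝ) ^ s * poch (-(N : ℝ) / 2) s / (Nat.factorial s : ℝ) *
        (poch (1 - α / 2) s * poch (1 - α / 2 - β / 2) s /
          (poch (1 - β / 2) s * poch ((N : ℝ) / 2 + 1 - α / 2 - β / 2) s)))
    (hwOdd : ∀ s : ℕ, 2 * s + 1 ≤ N →
      w (2 * s + 1) = (-1 : ℝ) ^ s * poch (-(N : ℝ) / 2) (s + 1) / (Nat.factorial s : ℝ) *
        (poch (1 - α / 2) s * poch (1 - α / 2 - β / 2) s /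
          (poch (1 - β / 2) s * poch ((N : ℝ) / 2 + 1 - α / 2 - β / 2) (s + 1)))) :
    ∀ s : ℕ, s ≤ N → 0 < w s := by
  obtain ⟨M, hM⟩ := hNeven
  subst hM hα hβ
  have hNR : ((M + M : ℕ) : ℝ) = 2 * (M : ℝ) := by push_cast; ring
  have hfac : ∀ t : ℕ, (0 : ℝ) < (Nat.factorial t : ℝ) := fun t =>
    Nat.cast_pos.mpr (Nat.factorial_pos t)
  intro s hs
  rcases Nat.even_or_odd s with ⟨t, rfl⟩ | ⟨t, rfl⟩
  · -- even case, s = t + t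
    have htM : t ≤ M := by omega
    have h2t : 2 * t ≤ M + M := by omega
    have hw := hwEven t h2t
    have hst : t + t = 2 * t := (two_mul t).symm
    rw [hst, hw]
    have hA : 0 < (-1 : ℝ) ^ t * poch (-((M + M : ℕ) : ℝ) / 2) t := by
      apply poch_sign
      intro j hj
      have hjM : (j : ℝ) + 1 ≤ (M : ℝ) := by exact_mod_cast (by omega : j + 1 ≤ M)
      linarith
    have hP : 0 < (-1 : ℝ) ^ t * poch (1 - (((M + M : ℕ) : ℝ) + ε₁) / 2) t := by
      apply poch_sign
      intro j hj
      have hjM : (j : ℝ) + 1 ≤ (M : ℝ) := by exact_mod_cast (by omega : j + 1 ≤ M)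
      linarith
    have hQ : 0 < (-1 : ℝ) ^ t * poch (1 - (((M + M : ℕ) : ℝ) + ε₁) / 2 - (((M + M : ℕ) : ℝ) + ε₂) / 2) t := by
      apply poch_sign
      intro j hj
      have hjM : (j : ℝ) + 1 ≤ (M : ℝ) := by exact_mod_cast (by omega : j + 1 ≤ M)
      have hM0 : (0 : ℝ) ≤ (M : ℝ) := Nat.cast_nonneg M
      linarith
    have hR : 0 < (-1 : ℝ) ^ t * poch (1 - (((M + M : ℕ) : ℝ) + ε₂) / 2) t := by
      apply poch_sign
      intro j hj
      have hjM : (j : ℝ) + 1 ≤ (M : ℝ) := by exact_mod_cast (by omega : j + 1 ≤ M)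
      linarith
    have hS : 0 < (-1 : ℝ) ^ t * poch (((M + M : ℕ) : ℝ) / 2 + 1 - (((M + M : ℕ) : ℝ) + ε₁) / 2 - (((M + M : ℕ) : ℝ) + ε₂) / 2) t := by
      apply poch_sign
      intro j hj
      have hjM : (j : ℝ) + 1 ≤ (M : ℝ) := by exact_mod_cast (by omega : j + 1 ≤ M)
      linarith
    have hkey : ((-1 : ℝ) ^ t) * ((-1 : ℝ) ^ t) = 1 := by
      rw [← pow_add]; exact Even.neg_one_pow ⟨t, rfl⟩
    have hNum : 0 < poch (1 - (((M + M : ℕ) : ℝ) + ε₁) / 2) t *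
        poch (1 - (((M + M : ℕ) : ℝ) + ε₁) / 2 - (((M + M : ℕ) : ℝ) + ε₂) / 2) t := by
      have h1 := mul_pos hP hQ
      have h2 := mul_mul_mul_comm ((-1 : ℝ) ^ t) (poch (1 - (((M + M : ℕ) : ℝ) + ε₁) / 2) t)
        ((-1 : ℝ) ^ t) (poch (1 - (((M + M : ℕ) : ℝ) + ε₁) / 2 - (((M + M : ℕ) : ℝ) + ε₂) / 2) t)
      rw [hkey, one_mul] at h2
      linarith [h2 ▸ h1]
    have hDen : 0 < poch (1 - (((M + M : ℕ) : ℝ) + ε₂) / 2) t *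
        poch (((M + M : ℕ) : ℝ) / 2 + 1 - (((M + M : ℕ) : ℝ) + ε₁) / 2 - (((M + M : ℕ) : ℝ) + ε₂) / 2) t := by
      have h1 := mul_pos hR hS
      have h2 := mul_mul_mul_comm ((-1 : ℝ) ^ t) (poch (1 - (((M + M : ℕ) : ℝ) + ε₂) / 2) t)
        ((-1 : ℝ) ^ t) (poch (((M + M : ℕ) : ℝ) / 2 + 1 - (((M + M : ℕ) : ℝ) + ε₁) / 2 - (((M + M : ℕ) : ℝ) + ε₂) / 2) t)
      rw [hkey, one_mul] at h2
      linarith [h2 ▸ h1]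
    exact mul_pos (div_pos hA (hfac t)) (div_pos hNum hDen)
  · -- odd case, s = 2 * t + 1
    have htM : t + 1 ≤ M := by omega
    have hw := hwOdd t hs
    rw [hw]
    have hA : 0 < (-1 : ℝ) ^ (t + 1) * poch (-((M + M : ℕ) : ℝ) / 2) (t + 1) := by
      apply poch_sign
      intro j hj
      have hjM : (j : ℝ) + 1 ≤ (M : ℝ) := by exact_mod_cast (by omega : j + 1 ≤ M)
      linarith
    have hP : 0 < (-1 : ℝ) ^ t * poch (1 - (((M + M : ℕ) : ℝ) + ε₁) / 2) t := by
      apply poch_sign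
      intro j hj
      have hjM : (j : ℝ) + 1 ≤ (M : ℝ) := by exact_mod_cast (by omega : j + 1 ≤ M)
      linarith
    have hQ : 0 < (-1 : ℝ) ^ t * poch (1 - (((M + M : ℕ) : ℝ) + ε₁) / 2 - (((M + M : ℕ) : ℝ) + ε₂) / 2) t := by
      apply poch_sign
      intro j hj
      have hjM : (j : ℝ) + 1 ≤ (M : ℝ) := by exact_mod_cast (by omega : j + 1 ≤ M)
      have hM0 : (0 : ℝ) ≤ (M : ℝ) := Nat.cast_nonneg M
      linarith
    have hR : 0 < (-1 : ℝ) ^ t * poch (1 - (((M + M : ℕ) : ℝ) + ε₂) / 2) t := by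
      apply poch_sign
      intro j hj
      have hjM : (j : ℝ) + 1 ≤ (M : ℝ) := by exact_mod_cast (by omega : j + 1 ≤ M)
      linarith
    have hS : 0 < (-1 : ℝ) ^ (t + 1) * poch (((M + M : ℕ) : ℝ) / 2 + 1 - (((M + M : ℕ) : ℝ) + ε₁) / 2 - (((M + M : ℕ) : ℝ) + ε₂) / 2) (t + 1) := by
      apply poch_sign
      intro j hj
      have hjM : (j : ℝ) + 1 ≤ (M : ℝ) := by exact_mod_cast (by omega : j + 1 ≤ M)
      linarith
    have hkey : ((-1 : ℝ) ^ t) * ((-1 : ℝ) ^ t) = 1 := by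
      rw [← pow_add]; exact Even.neg_one_pow ⟨t, rfl⟩
    have hkey2 : ((-1 : ℝ) ^ t) * ((-1 : ℝ) ^ (t + 1)) = -1 := by
      rw [← pow_add]; exact Odd.neg_one_pow ⟨t, by ring⟩
    have hNum : 0 < poch (1 - (((M + M : ℕ) : ℝ) + ε₁) / 2) t *
        poch (1 - (((M + M : ℕ) : ℝ) + ε₁) / 2 - (((M + M : ℕ) : ℝ) + ε₂) / 2) t := by
      have h1 := mul_pos hP hQ
      have h2 := mul_mul_mul_comm ((-1 : ℝ) ^ t) (poch (1 - (((M + M : ℕ) : ℝ) + ε₁) / 2) t)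
        ((-1 : ℝ) ^ t) (poch (1 - (((M + M : ℕ) : ℝ) + ε₁) / 2 - (((M + M : ℕ) : ℝ) + ε₂) / 2) t)
      rw [hkey, one_mul] at h2
      linarith [h2 ▸ h1]
    have hDen : poch (1 - (((M + M : ℕ) : ℝ) + ε₂) / 2) t *
        poch (((M + M : ℕ) : ℝ) / 2 + 1 - (((M + M : ℕ) : ℝ) + ε₁) / 2 - (((M + M : ℕ) : ℝ) + ε₂) / 2) (t + 1) < 0 := by
      have h1 := mul_pos hR hS
      have h2 := mul_mul_mul_comm ((-1 : ℝ) ^ t) (poch (1 - (((M + M : ℕ) : ℝ) + ε₂) / 2) t)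
        ((-1 : ℝ) ^ (t + 1)) (poch (((M + M : ℕ) : ℝ) / 2 + 1 - (((M + M : ℕ) : ℝ) + ε₁) / 2 - (((M + M : ℕ) : ℝ) + ε₂) / 2) (t + 1))
      rw [hkey2] at h2
      rw [h2] at h1
      linarith
    have hAneg : (-1 : ℝ) ^ t * poch (-((M + M : ℕ) : ℝ) / 2) (t + 1) < 0 := by
      have : (-1 : ℝ) ^ (t + 1) = -((-1 : ℝ) ^ t) := by rw [pow_succ]; ring
      rw [this] at hA
      linarith
    exact mul_pos_of_neg_of_neg (div_neg_of_neg_of_pos hAneg (hfac t))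
      (div_neg_of_pos_of_neg hNum hDen)
end

section
/- Let N be an odd positive integer and α = −1 + ε₁, β = −1 + ε₂ with ε₁ > 0, ε₂ > 0. Define the weights w_{2s} = (−1)^s ((−(N−1)/2)_s / s!) · (1/2+α/2)_s (1+α/2+β/2)_s / ((1/2+β/2)_s (N/2+3/2+α/2+β/2)_s) and w_{2s+1} = (−1)^s ((−(N−1)/2)_s / s!) · (1/2+α/2)_{s+1} (1+α/2+β/2)_s / ((1/2+β/2)_{s+1} (N/2+3/2+α/2+β/2)_s) for 0 ≤ s ≤ (N−1)/2. Then w_s > 0 for all s = 0, 1, …, N. -/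
lemma poch_pos {a : ℝ} (ha : 0 < a) (k : ℕ) : 0 < poch a k :=
  ascPochhammer_pos k a ha

lemma poch_neg_sign (a : ℝ) : ∀ s : ℕ, (∀ i : ℕ, i < s → a + i < 0) →
    0 < (-1 : ℝ) ^ s * poch a s := by
  intro s
  induction s with
  | zero => intro _; simp [poch]
  | succ n ih =>
    intro h
    have h1 : 0 < (-1 : ℝ) ^ n * poch a n := ih fun i hi => h i (Nat.lt_succ_of_lt hi)
    have h2 : a + n < 0 := h n (Nat.lt_succ_self n)
    have he : poch a (n + 1) = poch a n * (a + n) := by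
      simp [poch, ascPochhammer_succ_eval]
    rw [he, pow_succ]
    nlinarith

/-- positivity of the orthogonality weights of the dual $-1$
Hahn polynomials for odd $N$, with $\alpha = -1+\varepsilon_1$,
$\beta = -1+\varepsilon_2$, $\varepsilon_1,\varepsilon_2 > 0$. -/
theorem dualMinusOneHahn_weights_pos_odd
    (N : ℕ) (hN : 0 < N) (hNodd : Odd N)
    (ε₁ ε₂ α β : ℝ) (hε₁ : 0 < ε₁) (hε₂ : 0 < ε₂)
    (hα : α = -1 + ε₁) (hβ : β = -1 + ε₂)
    (w : ℕ → ℝ)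
    (hwEven : ∀ s : ℕ, 2 * s + 1 ≤ N →
      w (2 * s) = (-1 : ℝ) ^ s * poch (-(((N : ℝ) - 1) / 2)) s / (Nat.factorial s : ℝ) *
        (poch (1 / 2 + α / 2) s * poch (1 + α / 2 + β / 2) s /
          (poch (1 / 2 + β / 2) s * poch ((N : ℝ) / 2 + 3 / 2 + α / 2 + β / 2) s)))
    (hwOdd : ∀ s : ℕ, 2 * s + 1 ≤ N →
      w (2 * s + 1) = (-1 : ℝ) ^ s * poch (-(((N : ℝ) - 1) / 2)) s / (Nat.factorial s : ℝ) *
        (poch (1 / 2 + α / 2) (s + 1) * poch (1 + α / 2 + β / 2) s /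
          (poch (1 / 2 + β / 2) (s + 1) * poch ((N : ℝ) / 2 + 3 / 2 + α / 2 + β / 2) s))) :
    ∀ s : ℕ, s ≤ N → 0 < w s := by
  subst hα hβ
  have hA : ∀ t : ℕ, 2 * t + 1 ≤ N →
      0 < (-1 : ℝ) ^ t * poch (-(((N : ℝ) - 1) / 2)) t := by
    intro t ht
    apply poch_neg_sign
    intro i hi
    have h1 : 2 * i + 2 ≤ N := by omega
    have : (2 * i + 2 : ℝ) ≤ (N : ℝ) := by exact_mod_cast h1
    push_cast
    linarith
  have hB : 0 < (1 : ℝ) / 2 + (-1 + ε₁) / 2 := by linarith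
  have hC : 0 < (1 : ℝ) + (-1 + ε₁) / 2 + (-1 + ε₂) / 2 := by linarith
  have hD : 0 < (1 : ℝ) / 2 + (-1 + ε₂) / 2 := by linarith
  have hE : 0 < (N : ℝ) / 2 + 3 / 2 + (-1 + ε₁) / 2 + (-1 + ε₂) / 2 := by
    have : (0 : ℝ) ≤ N := Nat.cast_nonneg N
    linarith
  intro s hs
  rcases Nat.even_or_odd s with ⟨t, ht⟩ | ⟨t, ht⟩
  · have htN : 2 * t + 1 ≤ N := by
      rcases hNodd with ⟨m, hm⟩; omega
    have hst : s = 2 * t := by omega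
    rw [hst, hwEven t htN]
    exact mul_pos (div_pos (hA t htN) (by positivity))
      (div_pos (mul_pos (poch_pos hB t) (poch_pos hC t))
        (mul_pos (poch_pos hD t) (poch_pos hE t)))
  · have htN : 2 * t + 1 ≤ N := by omega
    have hst : s = 2 * t + 1 := by omega
    rw [hst, hwOdd t htN]
    exact mul_pos (div_pos (hA t htN) (by positivity))
      (div_pos (mul_pos (poch_pos hB (t + 1)) (poch_pos hC t))
        (mul_pos (poch_pos hD (t + 1)) (poch_pos hE t)))
end

section
/- Let τ be a real number and (u_n)_{n≥1} a sequence of real numbers with u_0 := 0. Let (R̃_n)_{n≥0} be the monic polynomials defined by R̃_{−1} = 0, R̃_0 = 1 and R̃_{n+1}(x) = (x − (−1)^n τ) R̃_n(x) − u_n R̃_{n−1}(x). Then there exist monic polynomials P_n of degree n and Q_n of degree n such that R̃_{2n}(x) = P_n(x²) and R̃_{2n+1}(x) = (x − τ) Q_n(x²) for all n ≥ 0, and these satisfy the three-term recurrences P_{n+1}(y) = (y − (u_{2n} + u_{2n+1} + τ²)) P_n(y) − u_{2n} u_{2n−1} P_{n−1}(y) and Q_{n+1}(y) = (y − (u_{2n+1}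 + u_{2n+2} + τ²)) Q_n(y) − u_{2n} u_{2n+1} Q_{n−1}(y), with P_{−1} = Q_{−1} = 0, P_0 = Q_0 = 1. -/
open Polynomial

noncomputable def PQaux (τ : ℝ) (u : ℕ → ℝ) : ℕ → Polynomial ℝ × Polynomial ℝ
  | 0 => (1, 1)
  | n+1 =>
    let p := (X - C (τ^2)) * (PQaux τ u n).2 - C (u (2*n+1)) * (PQaux τ u n).1
    (p, p - C (u (2*n+2)) * (PQaux τ u n).2)

lemma PQaux_fst_succ (τ : ℝ) (u : ℕ → ℝ) (n : ℕ) :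
    (PQaux τ u (n+1)).1
      = (X - C (τ^2)) * (PQaux τ u n).2 - C (u (2*n+1)) * (PQaux τ u n).1 := rfl

lemma PQaux_snd_succ (τ : ℝ) (u : ℕ → ℝ) (n : ℕ) :
    (PQaux τ u (n+1)).2
      = (PQaux τ u (n+1)).1 - C (u (2*n+2)) * (PQaux τ u n).2 := rfl

lemma PQaux_monic (τ : ℝ) (u : ℕ → ℝ) (n : ℕ) :
    (PQaux τ u n).1.Monic ∧ (PQaux τ u n).1.natDegree = n ∧
    (PQaux τ u n).2.Monic ∧ (PQaux τ u n).2.natDegree = n := by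
  induction n with
  | zero => simp [PQaux, monic_one]
  | succ n ih =>
    obtain ⟨hpm, hpd, hqm, hqd⟩ := ih
    have hmul : ((X - C (τ^2)) * (PQaux τ u n).2).Monic :=
      (monic_X_sub_C _).mul hqm
    have hmuld : ((X - C (τ^2)) * (PQaux τ u n).2).natDegree = n + 1 := by
      rw [(monic_X_sub_C (τ^2)).natDegree_mul hqm, natDegree_X_sub_C, hqd, add_comm]
    have hlt : (C (u (2*n+1)) * (PQaux τ u n).1).degree
        < ((X - C (τ^2)) * (PQaux τ u n).2).degree := by
      have h1 : (C (u (2*n+1)) * (PQaux τ u n).1).degree ≤ (n : WithBot ℕ) := by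
        calc (C (u (2*n+1)) * (PQaux τ u n).1).degree
            ≤ (C (u (2*n+1))).degree + (PQaux τ u n).1.degree := degree_mul_le _ _
          _ ≤ 0 + (n : WithBot ℕ) := add_le_add degree_C_le (degree_le_natDegree.trans (by exact_mod_cast hpd.le))
          _ = (n : WithBot ℕ) := zero_add _
      have h2 : ((X - C (τ^2)) * (PQaux τ u n).2).degree = ((n+1 : ℕ) : WithBot ℕ) := by
        rw [degree_eq_natDegree hmul.ne_zero, hmuld]
      rw [h2]
      exact lt_of_le_of_lt h1 (by exact_mod_cast Nat.cast_lt.mpr (Nat.lt_succ_self n))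
    have hPm : (PQaux τ u (n+1)).1.Monic := by
      rw [PQaux_fst_succ]; exact hmul.sub_of_left hlt
    have hPd : (PQaux τ u (n+1)).1.natDegree = n + 1 := by
      rw [PQaux_fst_succ]
      have := degree_sub_eq_left_of_degree_lt hlt
      rw [natDegree_eq_of_degree_eq this, hmuld]
    have hlt2 : (C (u (2*n+2)) * (PQaux τ u n).2).degree
        < (PQaux τ u (n+1)).1.degree := by
      have h1 : (C (u (2*n+2)) * (PQaux τ u n).2).degree ≤ (n : WithBot ℕ) := by
        calc (C (u (2*n+2)) * (PQaux τ u n).2).degree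
            ≤ (C (u (2*n+2))).degree + (PQaux τ u n).2.degree := degree_mul_le _ _
          _ ≤ 0 + (n : WithBot ℕ) := add_le_add degree_C_le (degree_le_natDegree.trans (by exact_mod_cast hqd.le))
          _ = (n : WithBot ℕ) := zero_add _
      have h2 : (PQaux τ u (n+1)).1.degree = ((n+1 : ℕ) : WithBot ℕ) := by
        rw [degree_eq_natDegree hPm.ne_zero, hPd]
      rw [h2]
      exact lt_of_le_of_lt h1 (by exact_mod_cast Nat.cast_lt.mpr (Nat.lt_succ_self n))
    refine ⟨hPm, hPd, ?_, ?_⟩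
    · rw [PQaux_snd_succ]; exact hPm.sub_of_left hlt2
    · rw [PQaux_snd_succ]
      have := degree_sub_eq_left_of_degree_lt hlt2
      rw [natDegree_eq_of_degree_eq this, hPd]

/-- a monic family satisfying
$\tilde R_{n+1}(x) = (x-(-1)^n\tau)\tilde R_n(x) - u_n \tilde R_{n-1}(x)$
(with $u_0 = 0$) decomposes as $\tilde R_{2n}(x) = P_n(x^2)$,
$\tilde R_{2n+1}(x) = (x-\tau)Q_n(x^2)$, where $P_n, Q_n$ are monic of degree
$n$ and satisfy the stated three-term recurrences. -/
theorem dualMinusOneHahn_even_odd_decomposition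
    (τ : ℝ) (u : ℕ → ℝ) (hu0 : u 0 = 0)
    (R : ℕ → ℝ → ℝ)
    (hR0 : ∀ x : ℝ, R 0 x = 1)
    (hR1 : ∀ x : ℝ, R 1 x = x - τ)
    (hRrec : ∀ (n : ℕ) (x : ℝ),
      R (n + 2) x = (x - (-1 : ℝ) ^ (n + 1) * τ) * R (n + 1) x - u (n + 1) * R n x) :
    ∃ P Q : ℕ → Polynomial ℝ,
      (∀ n : ℕ, (P n).Monic ∧ (P n).natDegree = n ∧ (Q n).Monic ∧ (Q n).natDegree = n) ∧
      (∀ (n : ℕ) (x : ℝ), R (2 * n) x = (P n).eval (x ^ 2)) ∧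
      (∀ (n : ℕ) (x : ℝ), R (2 * n + 1) x = (x - τ) * (Q n).eval (x ^ 2)) ∧
      P 0 = 1 ∧ Q 0 = 1 ∧
      P 1 = X - C (u 0 + u 1 + τ ^ 2) ∧
      Q 1 = X - C (u 1 + u 2 + τ ^ 2) ∧
      (∀ n : ℕ, P (n + 2) =
        (X - C (u (2 * n + 2) + u (2 * n + 3) + τ ^ 2)) * P (n + 1)
          - C (u (2 * n + 2) * u (2 * n + 1)) * P n) ∧
      (∀ n : ℕ, Q (n + 2) =
        (X - C (u (2 * n + 3) + u (2 * n + 4) + τ ^ 2)) * Q (n + 1)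
          - C (u (2 * n + 2) * u (2 * n + 3)) * Q n) := by
  have key : ∀ n : ℕ, (∀ x : ℝ, R (2 * n) x = (PQaux τ u n).1.eval (x ^ 2)) ∧
      (∀ x : ℝ, R (2 * n + 1) x = (x - τ) * (PQaux τ u n).2.eval (x ^ 2)) := by
    intro n
    induction n with
    | zero => exact ⟨fun x => by simpa [PQaux] using hR0 x,
        fun x => by simpa [PQaux] using hR1 x⟩
    | succ n ih =>
      obtain ⟨ihe, iho⟩ := ih
      have hodd : ((-1 : ℝ)) ^ (2 * n + 1) = -1 := Odd.neg_one_pow ⟨n, by ring⟩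
      have heven : ((-1 : ℝ)) ^ (2 * n + 1 + 1) = 1 := by
        rw [pow_succ, hodd]; ring
      have he : ∀ x : ℝ, R (2 * (n+1)) x = (PQaux τ u (n+1)).1.eval (x ^ 2) := by
        intro x
        have h := hRrec (2 * n) x
        rw [show 2 * (n+1) = 2 * n + 2 from by ring, h, hodd, iho x, ihe x,
          PQaux_fst_succ]
        simp only [eval_sub, eval_mul, eval_add, eval_X, eval_C, eval_pow]
        ring
      refine ⟨he, fun x => ?_⟩
      have h := hRrec (2 * n + 1) x
      rw [show 2 * (n+1) + 1 = 2 * n + 1 + 2 from by ring, h, heven,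
        show 2 * n + 1 + 1 = 2 * (n+1) from by ring, he x, iho x,
        PQaux_snd_succ, show 2 * n + 2 = 2 * n + 1 + 1 from rfl]
      simp only [eval_sub, eval_mul, eval_add, eval_X, eval_C, eval_pow]
      ring
  refine ⟨fun n => (PQaux τ u n).1, fun n => (PQaux τ u n).2,
    fun n => PQaux_monic τ u n, fun n => (key n).1, fun n => (key n).2, rfl, rfl,
    ?_, ?_, ?_, ?_⟩
  · show (PQaux τ u 1).1 = _
    rw [PQaux_fst_succ]
    simp [PQaux, hu0]
    ring
  · show (PQaux τ u 1).2 = _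
    rw [PQaux_snd_succ, PQaux_fst_succ]
    simp [PQaux, C_add]
    ring
  · intro n
    have e1 : (PQaux τ u (n+2)).1
        = (X - C (τ^2)) * (PQaux τ u (n+1)).2 - C (u (2*n+3)) * (PQaux τ u (n+1)).1 := by
      simpa [show 2*(n+1)+1 = 2*n+3 from by ring] using PQaux_fst_succ τ u (n+1)
    have e2 := PQaux_snd_succ τ u n
    have e3 := PQaux_fst_succ τ u n
    beta_reduce
    rw [e1, e2, e3]
    simp only [C_add, C_mul]
    ring
  · intro n
    have e1 : (PQaux τ u (n+2)).2
        = (PQaux τ u (n+2)).1 - C (u (2*n+4)) * (PQaux τ u (n+1)).2 := by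
      simpa [show 2*(n+1)+2 = 2*n+4 from by ring] using PQaux_snd_succ τ u (n+1)
    have e0 : (PQaux τ u (n+2)).1
        = (X - C (τ^2)) * (PQaux τ u (n+1)).2 - C (u (2*n+3)) * (PQaux τ u (n+1)).1 := by
      simpa [show 2*(n+1)+1 = 2*n+3 from by ring] using PQaux_fst_succ τ u (n+1)
    have e2 := PQaux_snd_succ τ u n
    beta_reduce
    rw [e1, e0, e2]
    simp only [C_add, C_mul]
    ring
end

section
/- Let τ be a real number and (u_n)_{n≥1} a sequence of real numbers with u_0 := 0. Let (R̃_n)_{n≥0} be the monic polynomials defined by R̃_{−1} = 0, R̃_0 = 1 and R̃_{n+1}(x) = (x − (−1)^n τ) R̃_n(x) − u_n R̃_{n−1}(x), and let P_n, Q_n be the monic polynomials with R̃_{2n}(x) = P_n(x²) and R̃_{2n+1}(x) = (x − τ) Q_n(x²). Then for every n ≥ 0 the polynomial identity (y − τ²) Q_n(y) = P_{n+1}(y) + u_{2n+1} P_n(y) holds; i.e., Q_n is the Christoffel transform of P_n at the point τ². -/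
open Polynomial

/-- with $\tilde R_{2n}(x) = P_n(x^2)$ and
$\tilde R_{2n+1}(x) = (x-\tau)Q_n(x^2)$ for the family satisfying
$\tilde R_{n+1}(x) = (x-(-1)^n\tau)\tilde R_n(x) - u_n \tilde R_{n-1}(x)$
(with $u_0 = 0$), the Christoffel-transform identity
$(y-\tau^2)Q_n(y) = P_{n+1}(y) + u_{2n+1}P_n(y)$ holds. -/
theorem dualMinusOneHahn_christoffel
    (τ : ℝ) (u : ℕ → ℝ) (hu0 : u 0 = 0)
    (R : ℕ → ℝ → ℝ)
    (hR0 : ∀ x : ℝ, R 0 x = 1)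
    (hR1 : ∀ x : ℝ, R 1 x = x - τ)
    (hRrec : ∀ (n : ℕ) (x : ℝ),
      R (n + 2) x = (x - (-1 : ℝ) ^ (n + 1) * τ) * R (n + 1) x - u (n + 1) * R n x)
    (P Q : ℕ → Polynomial ℝ)
    (hPQdeg : ∀ n : ℕ, (P n).Monic ∧ (P n).natDegree = n ∧
      (Q n).Monic ∧ (Q n).natDegree = n)
    (hP : ∀ (n : ℕ) (x : ℝ), R (2 * n) x = (P n).eval (x ^ 2))
    (hQ : ∀ (n : ℕ) (x : ℝ), R (2 * n + 1) x = (x - τ) * (Q n).eval (x ^ 2)) :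
    ∀ n : ℕ, (X - C (τ ^ 2)) * Q n = P (n + 1) + C (u (2 * n + 1)) * P n := by
  intro n
  apply Polynomial.eq_of_infinite_eval_eq
  apply Set.Infinite.mono (s := Set.Ici (0:ℝ)) ?_ (Set.Ici_infinite 0)
  intro y hy
  set x := Real.sqrt y with hx
  have hxy : x ^ 2 = y := Real.sq_sqrt hy
  have h1 := hRrec (2 * n) x
  have h2 := hQ n x
  have h3 := hP n x
  have h4 := hP (n + 1) x
  have hpow : (-1 : ℝ) ^ (2 * n + 1) = -1 := by
    simp [pow_succ, pow_mul]
  rw [show 2 * n + 2 = 2 * (n + 1) by ring] at h1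
  rw [h4, h2, h3, hpow] at h1
  simp only [Set.mem_setOf_eq, eval_mul, eval_add, eval_sub, eval_X, eval_C] at h1 ⊢
  have key : (x - -1 * τ) * ((x - τ) * eval (x ^ 2) (Q n)) =
      (x ^ 2 - τ ^ 2) * eval (x ^ 2) (Q n) := by ring
  rw [key, hxy] at h1
  linarith [h1]
end

section
/- Let N be an even positive integer and α > N, β > N. Let R_n be the monic dual −1 Hahn polynomials (even N case) and set η = 1/2 − (α+β)/4 and τ = 2N + 2 − α − β. Then for every integer n with 0 ≤ 2n ≤ N the polynomial identity R_{2n}(x−1) = 16^n (−N/2)_n (1−α/2)_n · Σ_{k=0}^{n} [(−n)_k (η + x/4)_k (η − x/4)_k] / [(−N/2)_k (1−α/2)_k k!] holds, and for every integer n with 0 ≤ 2n+1 ≤ N the identity R_{2n+1}(x−1) = 16^n (1−N/2)_n (1−α/2)_n (x − τ) · Σ_{k=0}^{n} [(−n)_k (η + x/4)_k (η − x/4)_k] / [(1−N/2)_k (1−α/2)_k k!] holds. -/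
set_option maxHeartbeats 4000000

lemma poch_zero (a : ℝ) : poch a 0 = 1 := by simp [poch]

lemma poch_succ (a : ℝ) (k : ℕ) : poch a (k + 1) = poch a k * (a + k) :=
  ascPochhammer_succ_eval k a

lemma poch_shift (a : ℝ) (k : ℕ) : poch a k * (a + k) = a * poch (a + 1) k := by
  induction k with
  | zero => simp [poch_zero]
  | succ k ih =>
      rw [poch_succ, poch_succ]
      push_cast
      calc poch a k * (a + k) * (a + (k+1)) = (poch a k * (a+k)) * (a + 1 + k) := by ring
      _ = a * poch (a+1) k * (a+1+k) := by rw [ih]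
      _ = a * (poch (a+1) k * (a+1+k)) := by ring

lemma poch_succ_left (a : ℝ) (k : ℕ) : poch a (k + 1) = a * poch (a + 1) k := by
  rw [poch_succ, poch_shift]

lemma poch_prod (a : ℝ) (k : ℕ) : poch a k = ∏ j ∈ Finset.range k, (a + j) := by
  induction k with
  | zero => simp [poch_zero]
  | succ k ih => rw [poch_succ, Finset.prod_range_succ, ih]

lemma poch_ne_zero {a : ℝ} {k : ℕ} (h : ∀ j < k, a + j ≠ 0) : poch a k ≠ 0 := by
  rw [poch_prod]
  exact Finset.prod_ne_zero_iff.2 fun j hj => h j (Finset.mem_range.1 hj)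

lemma poch_neg_nat (n : ℕ) : poch (-(n : ℝ)) (n + 1) = 0 := by
  rw [poch_prod]
  exact Finset.prod_eq_zero (Finset.self_mem_range_succ n) (by simp)

noncomputable def Ssum (a g η x : ℝ) (n : ℕ) : ℝ :=
  ∑ k ∈ Finset.range (n + 1),
    poch (-(n : ℝ)) k * poch (η + x / 4) k * poch (η - x / 4) k /
      (poch a k * poch g k * (Nat.factorial k : ℝ))

lemma star_id (N n : ℕ) (α η x : ℝ) (hα : (N : ℝ) < α) (hn : 2 * n + 3 ≤ N) :
    16 ^ (n+1) * poch (-(N : ℝ) / 2) (n+1) * poch (1 - α / 2) (n+1) *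
        Ssum (-(N : ℝ) / 2) (1 - α / 2) η x (n+1)
      - 4 * (2 * ((n : ℝ) + 1)) * (α - 2 * ((n : ℝ) + 1)) *
        (16 ^ n * poch (1 - (N : ℝ) / 2) n * poch (1 - α / 2) n *
          Ssum (1 - (N : ℝ) / 2) (1 - α / 2) η x n)
    = 16 ^ (n+1) * poch (1 - (N : ℝ) / 2) (n+1) * poch (1 - α / 2) (n+1) *
        Ssum (1 - (N : ℝ) / 2) (1 - α / 2) η x (n+1) := by
  have hNn : (2 * n + 3 : ℝ) ≤ N := by exact_mod_cast hn
  unfold Ssum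
  have hmid : ∑ k ∈ Finset.range (n + 1 + 1),
      poch (-(n : ℝ)) k * poch (η + x / 4) k * poch (η - x / 4) k /
        (poch (1 - (N:ℝ)/2) k * poch (1 - α / 2) k * (Nat.factorial k : ℝ))
      = ∑ k ∈ Finset.range (n + 1),
      poch (-(n : ℝ)) k * poch (η + x / 4) k * poch (η - x / 4) k /
        (poch (1 - (N:ℝ)/2) k * poch (1 - α / 2) k * (Nat.factorial k : ℝ)) := by
    rw [Finset.sum_range_succ, poch_neg_nat n]
    ring
  rw [← hmid]
  conv_lhs => rw [Finset.mul_sum, Finset.mul_sum, Finset.mul_sum]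
  conv_rhs => rw [Finset.mul_sum]
  rw [← Finset.sum_sub_distrib]
  apply Finset.sum_congr rfl
  intro k hk
  have hk' : k ≤ n + 1 := Nat.lt_succ_iff.mp (Finset.mem_range.mp hk)
  have hkR : (k : ℝ) ≤ (n : ℝ) + 1 := by exact_mod_cast hk'
  have hA : (-(N : ℝ) / 2) ≠ 0 := by intro h; nlinarith
  have hAk : (-(N : ℝ) / 2 + k) ≠ 0 := by intro h; nlinarith
  have hpA : poch (-(N : ℝ) / 2) k ≠ 0 := by
    apply poch_ne_zero; intro j hj
    have : (j : ℝ) < k := by exact_mod_cast hj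
    intro h; nlinarith
  have hpg : poch (1 - α / 2) k ≠ 0 := by
    apply poch_ne_zero; intro j hj
    have : (j : ℝ) + 1 ≤ k := by exact_mod_cast hj
    intro h; nlinarith
  have hfac : (Nat.factorial k : ℝ) ≠ 0 := by
    exact_mod_cast (Nat.factorial_pos k).ne'
  have hn1 : (-(n : ℝ) - 1) ≠ 0 := by
    have : (0:ℝ) ≤ n := Nat.cast_nonneg n
    intro h; linarith
  -- rewrite shifted pochhammers
  have e0 := poch_shift (-(N:ℝ)/2) k
  rw [show (-(N:ℝ)/2 + 1) = 1 - (N:ℝ)/2 by ring] at e0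
  have e1 : poch (1 - (N:ℝ)/2) k = poch (-(N:ℝ)/2) k * (-(N:ℝ)/2 + k) / (-(N:ℝ)/2) := by
    rw [eq_div_iff hA]
    linear_combination -e0
  have e2' := poch_shift (-(n:ℝ) - 1) k
  rw [show (-(n:ℝ) - 1 + 1) = -(n:ℝ) by ring] at e2'
  have e2 : poch (-(n:ℝ)) k = poch (-(n:ℝ) - 1) k * (-(n:ℝ) - 1 + k) / (-(n:ℝ) - 1) := by
    rw [eq_div_iff hn1]
    linear_combination -e2'
  have e3 : poch (-(N:ℝ)/2) (n+1) = (-(N:ℝ)/2) * poch (1 - (N:ℝ)/2) n := by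
    rw [poch_succ_left, show (-(N:ℝ)/2 + 1) = 1 - (N:ℝ)/2 by ring]
  have e4 : poch (1 - α/2) (n+1) = poch (1 - α/2) n * (1 - α/2 + n) := poch_succ _ n
  have e5 : poch (1 - (N:ℝ)/2) (n+1) = poch (1 - (N:ℝ)/2) n * (1 - (N:ℝ)/2 + n) :=
    poch_succ _ n
  have ecast : (-(↑(n+1) : ℝ)) = -(n:ℝ) - 1 := by push_cast; ring
  rw [ecast, e1, e2, e3, e4, e5, pow_succ]
  set p1 := poch (-(N:ℝ)/2) k with hp1
  set p2 := poch (1 - α/2) k with hp2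
  set p3 := poch (-(n:ℝ) - 1) k with hp3
  set p4 := poch (1 - (N:ℝ)/2) n with hp4
  set p5 := poch (1 - α/2) n with hp5
  set q1 := poch (η + x/4) k with hq1
  set q2 := poch (η - x/4) k with hq2
  set f := (Nat.factorial k : ℝ) with hf
  obtain ⟨s, hs⟩ : ∃ s : ℝ, s = -(N:ℝ)/2 + k := ⟨_, rfl⟩
  obtain ⟨t, ht⟩ : ∃ t : ℝ, t = -(n:ℝ) - 1 := ⟨_, rfl⟩
  have hs0 : s ≠ 0 := hs ▸ hAk
  have ht0 : t ≠ 0 := ht ▸ hn1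
  rw [← hs, ← ht]
  field_simp [hA, hs0, ht0, hpA, hpg, hfac]
  rw [hs, ht]
  ring

lemma ss_id (N n : ℕ) (α β x : ℝ) (hα : (N : ℝ) < α) (hn : 2 * n + 2 ≤ N) :
    (x^2 - (2*(N:ℝ)+2-α-β)^2) *
        (16^n * poch (1-(N:ℝ)/2) n * poch (1-α/2) n * Ssum (1-(N:ℝ)/2) (1-α/2) (1/2 - (α+β)/4) x n)
      - 4*((N:ℝ)-2*n)*(2*(n:ℝ)+β-N) *
        (16^n * poch (-(N:ℝ)/2) n * poch (1-α/2) n * Ssum (-(N:ℝ)/2) (1-α/2) (1/2 - (α+β)/4) x n)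
      = 16^(n+1) * poch (-(N:ℝ)/2) (n+1) * poch (1-α/2) (n+1) * Ssum (-(N:ℝ)/2) (1-α/2) (1/2 - (α+β)/4) x (n+1) := by
  have hNn : (2*(n:ℝ)+2) ≤ N := by exact_mod_cast hn
  unfold Ssum
  calc (x^2 - (2*(N:ℝ)+2-α-β)^2) *
        (16^n * poch (1-(N:ℝ)/2) n * poch (1-α/2) n * ∑ k ∈ Finset.range (n+1), (poch (-(n:ℝ)) k * poch (1/2 - (α+β)/4 + x/4) k * poch (1/2 - (α+β)/4 - x/4) k / (poch (1-(N:ℝ)/2) k * poch (1-α/2) k * (Nat.factorial k : ℝ))))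
      - 4*((N:ℝ)-2*n)*(2*(n:ℝ)+β-N) *
        (16^n * poch (-(N:ℝ)/2) n * poch (1-α/2) n * ∑ k ∈ Finset.range (n+1), (poch (-(n:ℝ)) k * poch (1/2 - (α+β)/4 + x/4) k * poch (1/2 - (α+β)/4 - x/4) k / (poch (-(N:ℝ)/2) k * poch (1-α/2) k * (Nat.factorial k : ℝ))))
      = ∑ k ∈ Finset.range (n+1), (((4*(2*((k:ℕ):ℝ)-N)*(2*((k:ℕ):ℝ)+N+2-α-β)) * (16^n * poch (1-(N:ℝ)/2) n * poch (1-α/2) n * (poch (-(n:ℝ)) k * poch (1/2 - (α+β)/4 + x/4) k * poch (1/2 - (α+β)/4 - x/4) k / (poch (1-(N:ℝ)/2) k * poch (1-α/2) k * (Nat.factorial k : ℝ)))) - 4*((N:ℝ)-2*n)*(2*(n:ℝ)+β-N) * (16^n * poch (-(N:ℝ)/2) n * poch (1-α/2) n * (poch (-(n:ℝ)) k * poch (1/2 - (α+β)/4 + x/4) k * poch (1/2 - (α+β)/4 - x/4) k / (poch (-(N:ℝ)/2) k * poch (1-α/2) k * (Nat.factorial k : ℝ))))) - 16 * (16^n *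 poch (1-(N:ℝ)/2) n * poch (1-α/2) n * (poch (-(n:ℝ)) k * poch (1/2 - (α+β)/4 + x/4) (k+1) * poch (1/2 - (α+β)/4 - x/4) (k+1) / (poch (1-(N:ℝ)/2) k * poch (1-α/2) k * (Nat.factorial k : ℝ))))) := by
        rw [Finset.mul_sum, Finset.mul_sum, Finset.mul_sum, Finset.mul_sum,
          ← Finset.sum_sub_distrib]
        refine Finset.sum_congr rfl fun k hk => ?_
        rw [poch_succ, poch_succ]
        ring
    _ = ∑ k ∈ Finset.range (n+1), ((4*(2*((k:ℕ):ℝ)-N)*(2*((k:ℕ):ℝ)+N+2-α-β)) * (16^n * poch (1-(N:ℝ)/2) n * poch (1-α/2) n * (poch (-(n:ℝ)) k * poch (1/2 - (α+β)/4 + x/4) k * poch (1/2 - (α+β)/4 - x/4) k / (poch (1-(N:ℝ)/2) k * poch (1-α/2) k * (Nat.factorial k : ℝ)))) - 4*((N:ℝ)-2*n)*(2*(n:ℝ)+β-N) * (16^n * poch (-(N:ℝ)/2) n * poch (1-α/2) n * (poch (-(n:ℝ)) k * poch (1/2 - (α+β)/4 + x/4) k * poch (1/2 - (α+β)/4 -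 x/4) k / (poch (-(N:ℝ)/2) k * poch (1-α/2) k * (Nat.factorial k : ℝ))))) - ∑ k ∈ Finset.range (n+1), 16 * (16^n * poch (1-(N:ℝ)/2) n * poch (1-α/2) n * (poch (-(n:ℝ)) k * poch (1/2 - (α+β)/4 + x/4) (k+1) * poch (1/2 - (α+β)/4 - x/4) (k+1) / (poch (1-(N:ℝ)/2) k * poch (1-α/2) k * (Nat.factorial k : ℝ)))) := by
        rw [← Finset.sum_sub_distrib]
    _ = ∑ k ∈ Finset.range (n+1+1), ((4*(2*((k:ℕ):ℝ)-N)*(2*((k:ℕ):ℝ)+N+2-α-β)) * (16^n * poch (1-(N:ℝ)/2) n * poch (1-α/2) n * (poch (-(n:ℝ)) k * poch (1/2 - (α+β)/4 + x/4) k * poch (1/2 - (α+β)/4 - x/4) k / (poch (1-(N:ℝ)/2) k * poch (1-α/2) k * (Nat.factorial k : ℝ)))) - 4*((N:ℝ)-2*n)*(2*(n:ℝ)+β-N) * (16^n * poch (-(N:ℝ)/2) n * poch (1-α/2) n * (poch (-(n:ℝ)) k * poch (1/2 - (α+β)/4 + x/4) k * poch (1/2 - (α+β)/4 - x/4) k /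 (poch (-(N:ℝ)/2) k * poch (1-α/2) k * (Nat.factorial k : ℝ))))) - ∑ k ∈ Finset.range (n+1), 16 * (16^n * poch (1-(N:ℝ)/2) n * poch (1-α/2) n * (poch (-(n:ℝ)) k * poch (1/2 - (α+β)/4 + x/4) (k+1) * poch (1/2 - (α+β)/4 - x/4) (k+1) / (poch (1-(N:ℝ)/2) k * poch (1-α/2) k * (Nat.factorial k : ℝ)))) := by
        rw [Finset.sum_range_succ (fun k => (4*(2*((k:ℕ):ℝ)-N)*(2*((k:ℕ):ℝ)+N+2-α-β)) * (16^n * poch (1-(N:ℝ)/2) n * poch (1-α/2) n * (poch (-(n:ℝ)) k * poch (1/2 - (α+β)/4 + x/4) k * poch (1/2 - (α+β)/4 - x/4) k / (poch (1-(N:ℝ)/2) k * poch (1-α/2) k * (Nat.factorial k : ℝ)))) - 4*((N:ℝ)-2*n)*(2*(n:ℝ)+β-N) * (16^n * poch (-(N:ℝ)/2) n * poch (1-α/2) n * (poch (-(n:ℝ)) k * poch (1/2 - (α+β)/4 + x/4) k * poch (1/2 - (α+β)/4 - x/4) k / (poch (-(N:ℝ)/2) k * poch (1-α/2) k * (Nat.factorial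 k : ℝ))))) (n+1)]
        rw [poch_neg_nat]
        ring
    _ = ((∑ i ∈ Finset.range (n+1), ((4*(2*(((i+1):ℕ):ℝ)-N)*(2*(((i+1):ℕ):ℝ)+N+2-α-β)) * (16^n * poch (1-(N:ℝ)/2) n * poch (1-α/2) n * (poch (-(n:ℝ)) (i+1) * poch (1/2 - (α+β)/4 + x/4) (i+1) * poch (1/2 - (α+β)/4 - x/4) (i+1) / (poch (1-(N:ℝ)/2) (i+1) * poch (1-α/2) (i+1) * (Nat.factorial (i+1) : ℝ)))) - 4*((N:ℝ)-2*n)*(2*(n:ℝ)+β-N) * (16^n * poch (-(N:ℝ)/2) n * poch (1-α/2) n * (poch (-(n:ℝ)) (i+1) * poch (1/2 - (α+β)/4 + x/4) (i+1) * poch (1/2 - (α+β)/4 - x/4) (i+1) / (poch (-(N:ℝ)/2) (i+1) * poch (1-α/2) (i+1) * (Nat.factorial (i+1) : ℝ)))))) + ((4*(2*((0:ℕ):ℝ)-N)*(2*((0:ℕ):ℝ)+N+2-α-β)) * (16^n * poch (1-(N:ℝ)/2) n * poch (1-α/2) n * (poch (-(n:ℝ)) 0 * poch (1/2 - (α+β)/4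 + x/4) 0 * poch (1/2 - (α+β)/4 - x/4) 0 / (poch (1-(N:ℝ)/2) 0 * poch (1-α/2) 0 * (Nat.factorial 0 : ℝ)))) - 4*((N:ℝ)-2*n)*(2*(n:ℝ)+β-N) * (16^n * poch (-(N:ℝ)/2) n * poch (1-α/2) n * (poch (-(n:ℝ)) 0 * poch (1/2 - (α+β)/4 + x/4) 0 * poch (1/2 - (α+β)/4 - x/4) 0 / (poch (-(N:ℝ)/2) 0 * poch (1-α/2) 0 * (Nat.factorial 0 : ℝ))))))
          - ∑ k ∈ Finset.range (n+1), 16 * (16^n * poch (1-(N:ℝ)/2) n * poch (1-α/2) n * (poch (-(n:ℝ)) k * poch (1/2 - (α+β)/4 + x/4) (k+1) * poch (1/2 - (α+β)/4 - x/4) (k+1) / (poch (1-(N:ℝ)/2) k * poch (1-α/2) k * (Nat.factorial k : ℝ)))) := by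
        rw [Finset.sum_range_succ' (fun k => (4*(2*((k:ℕ):ℝ)-N)*(2*((k:ℕ):ℝ)+N+2-α-β)) * (16^n * poch (1-(N:ℝ)/2) n * poch (1-α/2) n * (poch (-(n:ℝ)) k * poch (1/2 - (α+β)/4 + x/4) k * poch (1/2 - (α+β)/4 - x/4) k / (poch (1-(N:ℝ)/2) k * poch (1-α/2) k * (Nat.factorial k : ℝ)))) - 4*((N:ℝ)-2*n)*(2*(n:ℝ)+β-N) * (16^n * poch (-(N:ℝ)/2) n * poch (1-α/2) n * (poch (-(n:ℝ)) k * poch (1/2 - (α+β)/4 + x/4) k * poch (1/2 - (α+β)/4 - x/4) k / (poch (-(N:ℝ)/2) k * poch (1-α/2) k * (Nat.factorial k : ℝ))))) (n+1)]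
    _ = (∑ i ∈ Finset.range (n+1), (((4*(2*(((i+1):ℕ):ℝ)-N)*(2*(((i+1):ℕ):ℝ)+N+2-α-β)) * (16^n * poch (1-(N:ℝ)/2) n * poch (1-α/2) n * (poch (-(n:ℝ)) (i+1) * poch (1/2 - (α+β)/4 + x/4) (i+1) * poch (1/2 - (α+β)/4 - x/4) (i+1) / (poch (1-(N:ℝ)/2) (i+1) * poch (1-α/2) (i+1) * (Nat.factorial (i+1) : ℝ)))) - 4*((N:ℝ)-2*n)*(2*(n:ℝ)+β-N) * (16^n * poch (-(N:ℝ)/2) n * poch (1-α/2) n * (poch (-(n:ℝ)) (i+1) * poch (1/2 - (α+β)/4 + x/4) (i+1) * poch (1/2 - (α+β)/4 - x/4) (i+1) / (poch (-(N:ℝ)/2) (i+1) * poch (1-α/2) (i+1) * (Nat.factorial (i+1) : ℝ))))) - 16 * (16^n * poch (1-(N:ℝ)/2) n * poch (1-α/2) n * (poch (-(n:ℝ)) i * poch (1/2 - (α+β)/4 + x/4) (i+1) * poch (1/2 - (α+β)/4 - x/4) (i+1) / (poch (1-(N:ℝ)/2) i * poch (1-α/2) i * (Nat.factorial i : ℝ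))))))
          + ((4*(2*((0:ℕ):ℝ)-N)*(2*((0:ℕ):ℝ)+N+2-α-β)) * (16^n * poch (1-(N:ℝ)/2) n * poch (1-α/2) n * (poch (-(n:ℝ)) 0 * poch (1/2 - (α+β)/4 + x/4) 0 * poch (1/2 - (α+β)/4 - x/4) 0 / (poch (1-(N:ℝ)/2) 0 * poch (1-α/2) 0 * (Nat.factorial 0 : ℝ)))) - 4*((N:ℝ)-2*n)*(2*(n:ℝ)+β-N) * (16^n * poch (-(N:ℝ)/2) n * poch (1-α/2) n * (poch (-(n:ℝ)) 0 * poch (1/2 - (α+β)/4 + x/4) 0 * poch (1/2 - (α+β)/4 - x/4) 0 / (poch (-(N:ℝ)/2) 0 * poch (1-α/2) 0 * (Nat.factorial 0 : ℝ))))) := by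
        conv_rhs => rw [Finset.sum_sub_distrib]
        ring
    _ = (∑ i ∈ Finset.range (n+1), (16^(n+1) * poch (-(N:ℝ)/2) (n+1) * poch (1-α/2) (n+1)) * (poch (-(↑(n+1):ℝ)) (i+1) * poch (1/2 - (α+β)/4 + x/4) (i+1) * poch (1/2 - (α+β)/4 - x/4) (i+1) / (poch (-(N:ℝ)/2) (i+1) * poch (1-α/2) (i+1) * (Nat.factorial (i+1) : ℝ)))) + (16^(n+1) * poch (-(N:ℝ)/2) (n+1) * poch (1-α/2) (n+1)) * (poch (-(↑(n+1):ℝ)) 0 * poch (1/2 - (α+β)/4 + x/4) 0 * poch (1/2 - (α+β)/4 - x/4) 0 / (poch (-(N:ℝ)/2) 0 * poch (1-α/2) 0 * (Nat.factorial 0 : ℝ))) := by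
        refine congrArg₂ (· + ·) (Finset.sum_congr rfl fun i hi => ?_) ?_
        · -- per-index step
          have hi' : i ≤ n := Nat.lt_succ_iff.mp (Finset.mem_range.mp hi)
          have hiR : (i : ℝ) ≤ n := by exact_mod_cast hi'
          have hN0 : (-(N:ℝ)/2) ≠ 0 := by intro h; nlinarith
          have hNne : (N:ℝ) ≠ 0 := by intro h; nlinarith
          have ecast : (-(↑(n+1):ℝ)) = -(↑n:ℝ) - 1 := by push_cast; ring
          rcases eq_or_lt_of_le hi' with hin | hin
          · rw [hin]
            rw [poch_neg_nat]
            simp only [zero_mul, mul_zero, zero_div, zero_sub, sub_zero]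
            have em2n : poch (-(↑n:ℝ) - 1) (n+1) = (-(↑n:ℝ) - 1) * poch (-(↑n:ℝ)) n := by
              rw [poch_succ_left, show (-(↑n:ℝ) - 1 + 1) = -(↑n:ℝ) by ring]
            have efn : ((Nat.factorial (n+1) : ℝ)) = (Nat.factorial n : ℝ) * ((n:ℝ)+1) := by
              rw [Nat.factorial_succ]; push_cast; ring
            rw [ecast, em2n, efn, poch_succ (-(N:ℝ)/2) n, poch_succ (1 - α/2) n]
            have hP4 : poch (1-(N:ℝ)/2) n ≠ 0 := by
              apply poch_ne_zero; intro j hj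
              have : (j : ℝ) + 1 ≤ n := by exact_mod_cast hj
              intro h; nlinarith
            have hp5 : poch (1-α/2) n ≠ 0 := by
              apply poch_ne_zero; intro j hj
              have : (j : ℝ) + 1 ≤ n := by exact_mod_cast hj
              intro h; nlinarith
            have hpAn : poch (-(N:ℝ)/2) n ≠ 0 := by
              apply poch_ne_zero; intro j hj
              have : (j : ℝ) + 1 ≤ n := by exact_mod_cast hj
              intro h; nlinarith
            have hfn : (Nat.factorial n : ℝ) ≠ 0 := by
              exact_mod_cast (Nat.factorial_pos n).ne'
            obtain ⟨s1, hs1⟩ : ∃ s : ℝ, s = -(N:ℝ)/2 + n := ⟨_, rfl⟩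
            obtain ⟨s2, hs2⟩ : ∃ s : ℝ, s = 1 - α/2 + n := ⟨_, rfl⟩
            obtain ⟨s3, hs3⟩ : ∃ s : ℝ, s = (n:ℝ) + 1 := ⟨_, rfl⟩
            have hs10 : s1 ≠ 0 := by rw [hs1]; intro h; nlinarith
            have hs20 : s2 ≠ 0 := by rw [hs2]; intro h; nlinarith
            have hs30 : s3 ≠ 0 := by rw [hs3]; positivity
            rw [← hs1, ← hs2, ← hs3]
            set a4 := poch (-(N:ℝ)/2) n with ha4
            set a5 := poch (1-α/2) n with ha5
            set a6 := poch (1-(N:ℝ)/2) n with ha6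
            set a3 := poch (-(n:ℝ)) n with ha3
            set b1 := poch (1/2 - (α+β)/4 + x/4) (n+1) with hb1
            set b2 := poch (1/2 - (α+β)/4 - x/4) (n+1) with hb2
            set ff := (Nat.factorial n : ℝ) with hff
            field_simp [hNne, hN0, hP4, hp5, hpAn, hfn, hs10, hs20, hs30]
            rw [hs3]
            ring
          · -- i < n
            have hiN : (i : ℝ) + 1 ≤ n := by exact_mod_cast hin
            have em2 : poch (-(↑n:ℝ) - 1) (i+1) = (-(↑n:ℝ) - 1) * poch (-(↑n:ℝ)) i := by
              rw [poch_succ_left, show (-(↑n:ℝ) - 1 + 1) = -(↑n:ℝ) by ring]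
            have ef : ((Nat.factorial (i+1) : ℝ)) = (Nat.factorial i : ℝ) * ((i:ℝ)+1) := by
              rw [Nat.factorial_succ]; push_cast; ring
            have hp1 : poch (-(N:ℝ)/2) i ≠ 0 := by
              apply poch_ne_zero; intro j hj
              have : (j : ℝ) + 1 ≤ i := by exact_mod_cast hj
              intro h; nlinarith
            have hp2 : poch (1-α/2) i ≠ 0 := by
              apply poch_ne_zero; intro j hj
              have : (j : ℝ) + 1 ≤ i := by exact_mod_cast hj
              intro h; nlinarith
            have hfi : (Nat.factorial i : ℝ) ≠ 0 := by
              exact_mod_cast (Nat.factorial_pos i).ne'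
            have eshift := poch_shift (-(N:ℝ)/2) i
            rw [show (-(N:ℝ)/2 + 1) = 1 - (N:ℝ)/2 by ring] at eshift
            have eshiftn := poch_shift (-(N:ℝ)/2) n
            rw [show (-(N:ℝ)/2 + 1) = 1 - (N:ℝ)/2 by ring] at eshiftn
            have eP0 : poch (1-(N:ℝ)/2) i
                = poch (-(N:ℝ)/2) i * (-(N:ℝ)/2 + i) / (-(N:ℝ)/2) := by
              rw [eq_div_iff hN0]; linear_combination -eshift
            have eP4 : poch (1-(N:ℝ)/2) n
                = poch (-(N:ℝ)/2) n * (-(N:ℝ)/2 + n) / (-(N:ℝ)/2) := by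
              rw [eq_div_iff hN0]; linear_combination -eshiftn
            rw [ecast, em2, ef, poch_succ (-(n:ℝ)) i, poch_succ (-(N:ℝ)/2) i,
              poch_succ (1 - α/2) i, poch_succ (1-(N:ℝ)/2) i, eP0, eP4,
              poch_succ (-(N:ℝ)/2) n, poch_succ (1 - α/2) n]
            obtain ⟨s1, hs1⟩ : ∃ s : ℝ, s = -(N:ℝ)/2 + i := ⟨_, rfl⟩
            obtain ⟨s2, hs2⟩ : ∃ s : ℝ, s = 1 - α/2 + i := ⟨_, rfl⟩
            obtain ⟨s3, hs3⟩ : ∃ s : ℝ, s = (i:ℝ) + 1 := ⟨_, rfl⟩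
            obtain ⟨s4, hs4⟩ : ∃ s : ℝ, s = 1 - (N:ℝ)/2 + i := ⟨_, rfl⟩
            have hs10 : s1 ≠ 0 := by rw [hs1]; intro h; nlinarith
            have hs20 : s2 ≠ 0 := by rw [hs2]; intro h; nlinarith
            have hs30 : s3 ≠ 0 := by rw [hs3]; positivity
            have hs40 : s4 ≠ 0 := by rw [hs4]; intro h; nlinarith
            rw [← hs1, ← hs2, ← hs3, ← hs4]
            set a1 := poch (-(N:ℝ)/2) i with ha1
            set a2 := poch (1-α/2) i with ha2
            set a3 := poch (-(n:ℝ)) i with ha3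
            set a4 := poch (-(N:ℝ)/2) n with ha4
            set a5 := poch (1-α/2) n with ha5
            set b1 := poch (1/2 - (α+β)/4 + x/4) (i+1) with hb1
            set b2 := poch (1/2 - (α+β)/4 - x/4) (i+1) with hb2
            set ff := (Nat.factorial i : ℝ) with hff
            field_simp [hNne, hN0, hp1, hp2, hfi, hs10, hs20, hs30, hs40]
            rw [hs2, hs3, hs4]
            push_cast
            ring
        · -- base k = 0
          have hNn : (2*(n:ℝ)+2) ≤ N := by exact_mod_cast hn
          have hN0 : (-(N:ℝ)/2) ≠ 0 := by intro h; nlinarith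
          have hNne : (N:ℝ) ≠ 0 := by intro h; nlinarith
          have eshiftn := poch_shift (-(N:ℝ)/2) n
          rw [show (-(N:ℝ)/2 + 1) = 1 - (N:ℝ)/2 by ring] at eshiftn
          have eP4 : poch (1-(N:ℝ)/2) n
              = poch (-(N:ℝ)/2) n * (-(N:ℝ)/2 + n) / (-(N:ℝ)/2) := by
            rw [eq_div_iff hN0]; linear_combination -eshiftn
          simp only [poch_zero, Nat.factorial_zero, Nat.cast_one, mul_one, one_mul, div_one]
          rw [eP4, poch_succ (-(N:ℝ)/2) n, poch_succ (1 - α/2) n]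
          set a4 := poch (-(N:ℝ)/2) n with ha4
          set a5 := poch (1-α/2) n with ha5
          field_simp [hNne, hN0]
          ring
    _ = (16^(n+1) * poch (-(N:ℝ)/2) (n+1) * poch (1-α/2) (n+1)) * ∑ k ∈ Finset.range (n+1+1), (poch (-(↑(n+1):ℝ)) k * poch (1/2 - (α+β)/4 + x/4) k * poch (1/2 - (α+β)/4 - x/4) k / (poch (-(N:ℝ)/2) k * poch (1-α/2) k * (Nat.factorial k : ℝ))) := by
        rw [Finset.mul_sum, Finset.sum_range_succ' (fun k => (16^(n+1) * poch (-(N:ℝ)/2) (n+1) * poch (1-α/2) (n+1)) * (poch (-(↑(n+1):ℝ)) k * poch (1/2 - (α+β)/4 + x/4) k * poch (1/2 - (α+β)/4 - x/4) k / (poch (-(N:ℝ)/2) k * poch (1-α/2) k * (Nat.factorial k : ℝ)))) (n+1)]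

/-- explicit ${}_3F_2$ hypergeometric expressions for the monic
dual $-1$ Hahn polynomials with even positive $N$, $\alpha > N$, $\beta > N$,
where $\eta = 1/2 - (\alpha+\beta)/4$ and $\tau = 2N+2-\alpha-\beta$. -/

theorem dualMinusOneHahn_explicit_even
    (N : ℕ) (hN : 0 < N) (hNeven : Even N)
    (α β : ℝ) (hα : (N : ℝ) < α) (hβ : (N : ℝ) < β)
    (u b : ℕ → ℝ)
    (hu : ∀ n : ℕ, u n =
      if Even n then 4 * (n : ℝ) * (α - (n : ℝ))
      else 4 * ((N : ℝ) - (n : ℝ) + 1) * ((n : ℝ) + β - (N : ℝ) - 1))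
    (hb : ∀ n : ℕ, b n =
      if Even n then 2 * (N : ℝ) + 1 - α - β
      else α + β - 2 * (N : ℝ) - 3)
    (R : ℕ → ℝ → ℝ)
    (hR0 : ∀ x : ℝ, R 0 x = 1)
    (hR1 : ∀ x : ℝ, R 1 x = x - b 0)
    (hRrec : ∀ (n : ℕ) (x : ℝ),
      R (n + 2) x = (x - b (n + 1)) * R (n + 1) x - u (n + 1) * R n x)
    (η τ : ℝ) (hη : η = 1 / 2 - (α + β) / 4) (hτ : τ = 2 * (N : ℝ) + 2 - α - β) :
    (∀ n : ℕ, 2 * n ≤ N → ∀ x : ℝ,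
      R (2 * n) (x - 1) =
        16 ^ n * poch (-(N : ℝ) / 2) n * poch (1 - α / 2) n *
          ∑ k ∈ Finset.range (n + 1),
            poch (-(n : ℝ)) k * poch (η + x / 4) k * poch (η - x / 4) k /
              (poch (-(N : ℝ) / 2) k * poch (1 - α / 2) k * (Nat.factorial k : ℝ))) ∧
    (∀ n : ℕ, 2 * n + 1 ≤ N → ∀ x : ℝ,
      R (2 * n + 1) (x - 1) =
        16 ^ n * poch (1 - (N : ℝ) / 2) n * poch (1 - α / 2) n * (x - τ) *
          ∑ k ∈ Finset.range (n + 1),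
            poch (-(n : ℝ)) k * poch (η + x / 4) k * poch (η - x / 4) k /
              (poch (1 - (N : ℝ) / 2) k * poch (1 - α / 2) k * (Nat.factorial k : ℝ))) := by
  subst hη hτ
  have key : ∀ m : ℕ,
      (2 * m ≤ N → ∀ y : ℝ, R (2 * m) (y - 1) =
        16 ^ m * poch (-(N:ℝ)/2) m * poch (1 - α/2) m *
          Ssum (-(N:ℝ)/2) (1 - α/2) (1/2 - (α+β)/4) y m)
      ∧ (2 * m + 1 ≤ N → ∀ y : ℝ, R (2 * m + 1) (y - 1) =
        16 ^ m * poch (1 - (N:ℝ)/2) m * poch (1 - α/2) m * (y - (2*(N:ℝ)+2-α-β)) *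
          Ssum (1 - (N:ℝ)/2) (1 - α/2) (1/2 - (α+β)/4) y m) := by
    intro m
    induction m with
    | zero =>
      refine ⟨fun _ y => ?_, fun _ y => ?_⟩
      · rw [show (2*0 : ℕ) = 0 from rfl, hR0]
        simp [Ssum, Finset.sum_range_one, poch_zero, Nat.factorial_zero]
      · rw [show (2*0+1 : ℕ) = 1 from rfl, hR1, hb 0, if_pos (by decide : Even 0)]
        have h0 : Ssum (1 - (N:ℝ)/2) (1 - α/2) (1/2 - (α+β)/4) y 0 = 1 := by
          simp [Ssum, poch_zero]
        rw [h0]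
        simp only [poch_zero, pow_zero]
        ring
    | succ m ih =>
      have hodd : ¬ Even (2*m + 1) := by
        rw [Nat.even_add_one]
        exact not_not_intro (even_two_mul m)
      have heven2 : Even (2*m + 1 + 1) := ⟨m+1, by ring⟩
      have hEnew : 2 * (m+1) ≤ N → ∀ y : ℝ, R (2 * (m+1)) (y - 1) =
          16 ^ (m+1) * poch (-(N:ℝ)/2) (m+1) * poch (1 - α/2) (m+1) *
            Ssum (-(N:ℝ)/2) (1 - α/2) (1/2 - (α+β)/4) y (m+1) := by
        intro h2 y
        rw [show 2*(m+1) = 2*m+2 by ring, hRrec (2*m) (y-1), hu (2*m+1), hb (2*m+1),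
          if_neg hodd, if_neg hodd, ih.2 (by omega) y, ih.1 (by omega) y]
        have hss := ss_id N m α β y hα (by omega)
        push_cast at hss ⊢
        linear_combination hss
      refine ⟨hEnew, fun h3 y => ?_⟩
      have hE' := hEnew (by omega) y
      rw [show 2*(m+1) = 2*m+1+1 by ring] at hE'
      rw [show 2*(m+1)+1 = 2*m+1+2 by ring, hRrec (2*m+1) (y-1), hu (2*m+1+1),
        hb (2*m+1+1), if_pos heven2, if_pos heven2, hE', ih.2 (by omega) y]
      have hst := star_id N m α (1/2 - (α+β)/4) y hα (by omega)
      push_cast at hst ⊢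
      linear_combination (y - (2*(N:ℝ)+2-α-β)) * hst
  constructor
  · intro n hn x
    simpa only [Ssum] using (key n).1 hn x
  · intro n hn x
    simpa only [Ssum] using (key n).2 hn x
end
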